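/- Let ν > −1, let N be a nonnegative integer, and let n ≥ 1 be an integer. Define T^ν_{N,n}(x) = x^{N + 1/2} · (N! n! / (N + n)!) · P_n^{(N,ν)}(1 − 2x²). Then for all x > 0: x² · T^ν_{N,n}(x) = a_n T^ν_{N,n+1}(x) + b_n T^ν_{N,n}(x) + c_n T^ν_{N,n−1}(x), where a_n = −(n + N + 1)(n + N + ν + 1) / ((2n + N + ν + 1)(2n + N + ν + 2)), b_n = (1/2) ( 1 + (N² − ν²) / ((2n + N + ν)(2n + N + ν + 2)) ), and c_n = −n(n + ν) / ((2n + N + ν)(2n + N + ν + 1)). -/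

import Mathlib

open Real MeasureTheory

/-- Pochhammer symbol `(a)_k = a (a+1) ⋯ (a+k-1)`. -/
noncomputable def poch (a : ℝ) (k : ℕ) : ℝ := ∏ i ∈ Finset.range k, (a + i)

/-- Bessel function of the first kind of real order `μ`, via its defining series. -/
noncomputable def besselJ (μ x : ℝ) : ℝ :=
  ∑' k : ℕ, (-1) ^ k / (k.factorial * Real.Gamma (μ + k + 1)) * (x / 2) ^ (2 * (k : ℝ) + μ)

/-- Jacobi polynomial `P_n^{(α,β)}(x)` via its hypergeometric series. -/
noncomputable def jacobiP (α β : ℝ) (n : ℕ) (x : ℝ) : ℝ :=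
  poch (α + 1) n / n.factorial *
    ∑ k ∈ Finset.range (n + 1),
      poch (-(n : ℝ)) k * poch ((n : ℝ) + α + β + 1) k / (poch (α + 1) k * k.factorial) *
        ((1 - x) / 2) ^ k

/-- `T^ν_{N,n}(x) = x^{N+1/2} (N! n!/(N+n)!) P_n^{(N,ν)}(1-2x²)`. -/
noncomputable def Tfun (ν : ℝ) (N n : ℕ) (x : ℝ) : ℝ :=
  x ^ ((N : ℝ) + 1 / 2) * ((N.factorial * n.factorial : ℝ) / (N + n).factorial) *
    jacobiP N ν n (1 - 2 * x ^ 2)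

/-!
Up to the factor `x ^ (N + 1/2)`, `T^ν_{N,n}(x)` is the hypergeometric polynomial
`p_n(z) = ₂F₁(-n, n + N + ν + 1; N + 1; z)` at `z = x²`: the prefactor `N! n! / (N + n)!` cancels
the leading factor `(N + 1)_n / n!` of the Jacobi polynomial. The recurrence
`z p_n = a_n p_{n+1} + b_n p_n + c_n p_{n-1}` is then checked coefficientwise. The constant terms
give `a_n + b_n + c_n = 0`, since every `p_m(0) = 1`. For the coefficient of `z^(k+1)` the three
neighbouring coefficients `(p_{n+1})_{k+1}`, `(p_n)_{k+1}`, `(p_{n-1})_{k+1}` are rational multiples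
of `(p_n)_k` (contiguous relations of the Pochhammer symbols), which leaves an identity between
rational functions of `n, k, α, β`.
-/

lemma poch_succ_right (a : ℝ) (k : ℕ) : poch a (k + 1) = poch a k * (a + k) :=
  Finset.prod_range_succ _ _

lemma poch_succ_left (a : ℝ) (k : ℕ) : poch a (k + 1) = a * poch (a + 1) k := by
  simp only [poch, Finset.prod_range_succ', Nat.cast_zero, add_zero, Nat.cast_succ, add_assoc,
    add_comm (1 : ℝ), mul_comm]

lemma poch_pos {a : ℝ} (ha : 0 < a) (k : ℕ) : 0 < poch a k :=
  Finset.prod_pos fun _ _ => by positivity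

lemma poch_neg_natCast_eq_zero {n k : ℕ} (h : n < k) : poch (-n) k = 0 :=
  Finset.prod_eq_zero (Finset.mem_range.2 h) (by simp)

lemma poch_natCast_add_one_mul_factorial (N n : ℕ) :
    poch ((N : ℝ) + 1) n * N.factorial = (N + n).factorial := by
  induction n with
  | zero => simp [poch]
  | succ n ih =>
    rw [poch_succ_right, ← Nat.add_assoc, Nat.factorial_succ, mul_right_comm, ih]
    push_cast
    ring

noncomputable def jacobiCoeff (α β n : ℝ) (k : ℕ) : ℝ :=
  poch (-n) k * poch (n + α + β + 1) k / (poch (α + 1) k * k.factorial)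

/-- `₂F₁(-n, n + α + β + 1; α + 1; z) = n! / (α + 1)_n · P_n^{(α,β)}(1 - 2z)`. -/
noncomputable def jacobiSeries (α β : ℝ) (n : ℕ) (z : ℝ) : ℝ :=
  ∑ k ∈ Finset.range (n + 1), jacobiCoeff α β n k * z ^ k

noncomputable def jacobiRecA (α β n : ℝ) : ℝ :=
  -((n + α + 1) * (n + α + β + 1) / ((2 * n + α + β + 1) * (2 * n + α + β + 2)))

noncomputable def jacobiRecB (α β n : ℝ) : ℝ :=
  (1 / 2) * (1 + (α ^ 2 - β ^ 2) / ((2 * n + α + β) * (2 * n + α + β + 2)))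

noncomputable def jacobiRecC (α β n : ℝ) : ℝ :=
  -(n * (n + β) / ((2 * n + α + β) * (2 * n + α + β + 1)))

section Coefficients

variable {α β n : ℝ}

@[simp]
lemma jacobiCoeff_zero : jacobiCoeff α β n 0 = 1 := by
  simp [jacobiCoeff, poch]

lemma jacobiCoeff_natCast_eq_zero {n k : ℕ} (h : n < k) : jacobiCoeff α β n k = 0 := by
  rw [jacobiCoeff, poch_neg_natCast_eq_zero h, zero_mul, zero_div]

lemma jacobiCoeff_succ (hα : -1 < α) (k : ℕ) :
    jacobiCoeff α β n (k + 1) =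
      (k - n) * (n + α + β + 1 + k) / ((α + 1 + k) * (k + 1)) * jacobiCoeff α β n k := by
  have : 0 < poch (α + 1) k := poch_pos (by linarith) k
  have : 0 < α + 1 + k := by linarith [k.cast_nonneg (α := ℝ)]
  simp only [jacobiCoeff, poch_succ_right, Nat.factorial_succ, Nat.cast_mul, Nat.cast_succ]
  field_simp
  ring

lemma jacobiCoeff_add_one_succ (hα : -1 < α) (hW : n + α + β + 1 ≠ 0) (k : ℕ) :
    jacobiCoeff α β (n + 1) (k + 1) =
      -(n + 1) * (n + α + β + 1 + k) * (n + α + β + 2 + k) /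
        ((n + α + β + 1) * (α + 1 + k) * (k + 1)) * jacobiCoeff α β n k := by
  have : 0 < poch (α + 1) k := poch_pos (by linarith) k
  have : 0 < α + 1 + k := by linarith [k.cast_nonneg (α := ℝ)]
  have hfirst : poch (-(n + 1)) (k + 1) = -(n + 1) * poch (-n) k := by
    rw [poch_succ_left, neg_add', sub_add_cancel]
  have hsecond : poch (n + 1 + α + β + 1) (k + 1) =
      poch (n + α + β + 1) k * (n + α + β + 1 + k) * (n + α + β + 2 + k) / (n + α + β + 1) := by
    rw [eq_div_iff hW, show n + 1 + α + β + 1 = n + α + β + 1 + 1 by ring, mul_comm,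
      ← poch_succ_left, poch_succ_right, poch_succ_right]
    push_cast
    ring
  simp only [jacobiCoeff, hfirst, hsecond, poch_succ_right, Nat.factorial_succ, Nat.cast_mul,
    Nat.cast_succ]
  field_simp

lemma jacobiCoeff_sub_one_succ (hα : -1 < α) (hn : n ≠ 0) (k : ℕ) :
    jacobiCoeff α β (n - 1) (k + 1) =
      (k - n) * (k - n + 1) * (n + α + β) / (-n * (α + 1 + k) * (k + 1)) *
        jacobiCoeff α β n k := by
  have : 0 < poch (α + 1) k := poch_pos (by linarith) k
  have : 0 < α + 1 + k := by linarith [k.cast_nonneg (α := ℝ)]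
  have hfirst : poch (-(n - 1)) (k + 1) = poch (-n) k * (k - n) * (k - n + 1) / -n := by
    rw [eq_div_iff (neg_ne_zero.2 hn), mul_comm, show -(n - 1) = -n + 1 by ring,
      ← poch_succ_left, poch_succ_right, poch_succ_right]
    push_cast
    ring
  have hsecond : poch (n - 1 + α + β + 1) (k + 1) = (n + α + β) * poch (n + α + β + 1) k := by
    rw [poch_succ_left, show n - 1 + α + β + 1 + 1 = n + α + β + 1 by ring]
    ring
  simp only [jacobiCoeff, hfirst, hsecond, poch_succ_right, Nat.factorial_succ, Nat.cast_mul,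
    Nat.cast_succ]
  field_simp

lemma jacobiRecA_add_jacobiRecB_add_jacobiRecC (hα : -1 < α) (hβ : -1 < β) (hn : 1 ≤ n) :
    jacobiRecA α β n + jacobiRecB α β n + jacobiRecC α β n = 0 := by
  unfold jacobiRecA jacobiRecB jacobiRecC
  -- `field_simp` rewrites `2 * n` to `n * 2`, so the denominators are named to stay recognisable.
  set s := 2 * n + α + β with hs
  have : 0 < s := by linarith
  have : 0 < s + 1 := by linarith
  have : 0 < s + 2 := by linarith
  field_simp
  rw [hs]
  ring

lemma jacobiCoeff_eq_recurrence (hα : -1 < α) (hβ : -1 < β) (hn : 1 ≤ n) (k : ℕ) :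
    jacobiCoeff α β n k =
      jacobiRecA α β n * jacobiCoeff α β (n + 1) (k + 1) +
        jacobiRecB α β n * jacobiCoeff α β n (k + 1) +
        jacobiRecC α β n * jacobiCoeff α β (n - 1) (k + 1) := by
  rw [jacobiCoeff_add_one_succ hα (by linarith), jacobiCoeff_succ hα,
    jacobiCoeff_sub_one_succ hα (by linarith)]
  have hratio : jacobiRecA α β n * (-(n + 1) * (n + α + β + 1 + k) * (n + α + β + 2 + k) /
        ((n + α + β + 1) * (α + 1 + k) * (k + 1))) +
      jacobiRecB α β n * ((k - n) * (n + α + β + 1 + k) / ((α + 1 + k) * (k + 1))) +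
      jacobiRecC α β n * ((k - n) * (k - n + 1) * (n + α + β) / (-n * (α + 1 + k) * (k + 1))) =
        1 := by
    unfold jacobiRecA jacobiRecB jacobiRecC
    set s := 2 * n + α + β with hs
    have : 0 < s := by linarith
    have : 0 < s + 1 := by linarith
    have : 0 < s + 2 := by linarith
    have : 0 < n + α + β + 1 := by linarith
    have : 0 < α + 1 + k := by linarith [k.cast_nonneg (α := ℝ)]
    have : 0 < n := by linarith
    field_simp
    rw [hs]
    ring
  linear_combination -jacobiCoeff α β n k * hratio

end Coefficients

lemma jacobiSeries_eq_sum_range (α β : ℝ) {n M : ℕ} (h : n < M) (z : ℝ) :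
    jacobiSeries α β n z = ∑ k ∈ Finset.range M, jacobiCoeff α β n k * z ^ k := by
  refine Finset.sum_subset (Finset.range_subset_range.2 h) fun k _ hk => ?_
  rw [jacobiCoeff_natCast_eq_zero (by simpa using hk), zero_mul]

lemma mul_jacobiSeries {α β : ℝ} (hα : -1 < α) (hβ : -1 < β) {n : ℕ} (hn : 1 ≤ n) (z : ℝ) :
    z * jacobiSeries α β n z =
      jacobiRecA α β n * jacobiSeries α β (n + 1) z + jacobiRecB α β n * jacobiSeries α β n z +
        jacobiRecC α β n * jacobiSeries α β (n - 1) z := by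
  have hn' : (1 : ℝ) ≤ n := by exact_mod_cast hn
  have hcast : ((n - 1 : ℕ) : ℝ) = n - 1 := Nat.cast_pred hn
  calc z * jacobiSeries α β n z
      = ∑ k ∈ Finset.range (n + 1), jacobiCoeff α β n k * z ^ (k + 1) := by
        rw [jacobiSeries, Finset.mul_sum]
        exact Finset.sum_congr rfl fun k _ => by ring
    _ = ∑ k ∈ Finset.range (n + 1),
          (jacobiRecA α β n * jacobiCoeff α β (n + 1 : ℕ) (k + 1) +
            jacobiRecB α β n * jacobiCoeff α β n (k + 1) +
            jacobiRecC α β n * jacobiCoeff α β (n - 1 : ℕ) (k + 1)) * z ^ (k + 1) := by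
        refine Finset.sum_congr rfl fun k _ => ?_
        rw [jacobiCoeff_eq_recurrence hα hβ hn', Nat.cast_succ, hcast]
    _ = ∑ k ∈ Finset.range (n + 2),
          (jacobiRecA α β n * jacobiCoeff α β (n + 1 : ℕ) k +
            jacobiRecB α β n * jacobiCoeff α β n k +
            jacobiRecC α β n * jacobiCoeff α β (n - 1 : ℕ) k) * z ^ k := by
        rw [Finset.sum_range_succ' _ (n + 1)]
        simp [jacobiRecA_add_jacobiRecB_add_jacobiRecC hα hβ hn']
    _ = _ := by
        rw [jacobiSeries_eq_sum_range α β (by omega : n < n + 2) z,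
          jacobiSeries_eq_sum_range α β (by omega : n - 1 < n + 2) z, jacobiSeries,
          Finset.mul_sum, Finset.mul_sum, Finset.mul_sum, ← Finset.sum_add_distrib,
          ← Finset.sum_add_distrib]
        exact Finset.sum_congr rfl fun k _ => by ring

lemma Tfun_eq_rpow_mul_jacobiSeries (ν : ℝ) (N n : ℕ) (x : ℝ) :
    Tfun ν N n x = x ^ ((N : ℝ) + 1 / 2) * jacobiSeries N ν n (x ^ 2) := by
  have hprefactor : (N.factorial * n.factorial : ℝ) / (N + n).factorial *
      (poch ((N : ℝ) + 1) n / n.factorial) = 1 := by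
    have := poch_pos (by positivity : (0 : ℝ) < N + 1) n
    rw [← poch_natCast_add_one_mul_factorial N n]
    field_simp
  have hz : (1 - (1 - 2 * x ^ 2)) / 2 = x ^ 2 := by ring
  rw [Tfun, jacobiP, hz]
  change _ * _ * (_ * jacobiSeries N ν n (x ^ 2)) = _
  linear_combination x ^ ((N : ℝ) + 1 / 2) * jacobiSeries N ν n (x ^ 2) * hprefactor

theorem Tfun_three_term_recurrence_general (ν : ℝ) (hν : ν > -1) (N : ℕ) (n : ℕ) (hn : 1 ≤ n)
    (x : ℝ) :
    x ^ 2 * Tfun ν N n x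
      = (-(((n : ℝ) + N + 1) * ((n : ℝ) + N + ν + 1) /
            ((2 * n + N + ν + 1) * (2 * n + N + ν + 2)))) * Tfun ν N (n + 1) x
        + ((1 / 2) * (1 + ((N : ℝ) ^ 2 - ν ^ 2) /
            ((2 * n + N + ν) * (2 * n + N + ν + 2)))) * Tfun ν N n x
        + (-((n : ℝ) * ((n : ℝ) + ν) /
            ((2 * n + N + ν) * (2 * n + N + ν + 1)))) * Tfun ν N (n - 1) x := by
  have hN : (-1 : ℝ) < N := by linarith [N.cast_nonneg (α := ℝ)]
  have h := mul_jacobiSeries hN hν hn (x ^ 2)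
  unfold jacobiRecA jacobiRecB jacobiRecC at h
  simp only [Tfun_eq_rpow_mul_jacobiSeries]
  linear_combination x ^ ((N : ℝ) + 1 / 2) * h

theorem Tfun_three_term_recurrence (ν : ℝ) (hν : ν > -1) (N : ℕ) (n : ℕ) (hn : 1 ≤ n)
    (x : ℝ) (hx : x > 0) :
    x ^ 2 * Tfun ν N n x
      = (-(((n : ℝ) + N + 1) * ((n : ℝ) + N + ν + 1) /
            ((2 * n + N + ν + 1) * (2 * n + N + ν + 2)))) * Tfun ν N (n + 1) x
        + ((1 / 2) * (1 + ((N : ℝ) ^ 2 - ν ^ 2) /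
            ((2 * n + N + ν) * (2 * n + N + ν + 2)))) * Tfun ν N n x
        + (-((n : ℝ) * ((n : ℝ) + ν) /
            ((2 * n + N + ν) * (2 * n + N + ν + 1)))) * Tfun ν N (n - 1) x :=
  Tfun_three_term_recurrence_general ν hν N n hn x
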